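/- arXiv:2107.02641 — 3 statements merged into one kernel-verified Lean document; each statement's English description precedes it below -/
import Mathlib

section
/- If λ is an e-regular partition and μ is obtained from λ by removing the truncated e-rim (as in Xu's algorithm), then μ is again an e-regular partition and |μ| < |λ| whenever λ is nonempty. -/
/-- `l` is `e`-regular: no (nonzero) part is repeated `e` or more times. -/
def RegularL (e : ℕ) (l : List ℕ) : Prop := ∀ v, 0 < v → l.count v < e

/-- `rimCounts e c l` : going down the rows of the partition `l`, the number `tᵢ` of
`e`-rim nodes collected in each row, starting with `c` nodes already collected.  In a row
of size `a` followed by a row of size `next`, the available rim nodes are the columns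
`a, a-1, …` (there are `a - next + 1` of them, or `a` if `next = 0`), and one collects
nodes until the running count is divisible by `e` (then one drops a row) or the rim of
the row is exhausted. -/
def rimCounts (e : ℕ) : ℕ → List ℕ → List ℕ
  | _, [] => []
  | c, a :: rest =>
      let next := rest.headD 0
      let n := if next = 0 then a else a - next + 1
      let t := min n (if c % e = 0 then e else e - c % e)
      t :: rimCounts e (c + t) rest

/-- The partition obtained by removing the truncated `e`-rim of `l` : in each row one
removes the `tᵢ - 1` rightmost nodes (those `e`-rim nodes whose left neighbour is also in
the `e`-rim), and when `e` does not divide the size of the `e`-rim one also removes the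
leftmost `e`-rim node of the last row; zero rows are then discarded. -/
def tildeParts (e : ℕ) (l : List ℕ) : List ℕ :=
  let ts := rimCounts e 0 l
  let base := List.zipWith (fun a t => a - (t - 1)) l ts
  let base' := if ts.sum % e = 0 then base
    else base.set (base.length - 1) (base.getLast?.getD 1 - 1)
  base'.filter (fun a => decide (0 < a))


def sVal (e c : ℕ) : ℕ := if c % e = 0 then e else e - c % e

def tv (e c a nx : ℕ) : ℕ := min (if nx = 0 then a else a - nx + 1) (sVal e c)

def bList (e c : ℕ) (l : List ℕ) : List ℕ :=
  List.zipWith (fun a t => a - (t - 1)) l (rimCounts e c l)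

lemma rimCounts_cons (e c a : ℕ) (rest : List ℕ) :
    rimCounts e c (a :: rest) =
      tv e c a (rest.headD 0) :: rimCounts e (c + tv e c a (rest.headD 0)) rest := rfl

lemma bList_cons (e c a : ℕ) (rest : List ℕ) :
    bList e c (a :: rest) =
      (a - (tv e c a (rest.headD 0) - 1)) :: bList e (c + tv e c a (rest.headD 0)) rest := rfl

lemma sVal_one_le {e : ℕ} (he : 1 < e) (c : ℕ) : 1 ≤ sVal e c := by
  have := Nat.mod_lt c (show 0 < e by omega)
  unfold sVal; split <;> omega

lemma sVal_le {e : ℕ} (he : 1 < e) (c : ℕ) : sVal e c ≤ e := by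
  unfold sVal; split <;> omega

lemma tv_pos {e : ℕ} (he : 1 < e) (c a nx : ℕ) (ha : 0 < a) : 1 ≤ tv e c a nx := by
  have := sVal_one_le he c
  unfold tv; split <;> omega

lemma tv_le_a (e c a nx : ℕ) (ha : 0 < a) : tv e c a nx ≤ a := by
  refine le_trans (min_le_left _ _) ?_
  split <;> omega

lemma tv_le_s (e c a nx : ℕ) : tv e c a nx ≤ sVal e c := min_le_right _ _

lemma tv_le_n (e c a nx : ℕ) (h : nx ≠ 0) : tv e c a nx ≤ a - nx + 1 := by
  unfold tv; rw [if_neg h]; exact min_le_left _ _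

lemma arith_ne_one {e : ℕ} (he : 1 < e) {c t : ℕ} (h2 : 2 ≤ t) (hts : t ≤ sVal e c) :
    (c + t) % e ≠ 1 := by
  have hr : c % e < e := Nat.mod_lt _ (by omega)
  have h1 : (c % e + t) % e = (c + t) % e := Nat.mod_add_mod c e t
  rw [← h1]
  unfold sVal at hts
  split at hts
  · rcases eq_or_lt_of_le hts with h | h
    · subst h; rename_i h0; rw [h0, Nat.zero_add, Nat.mod_self]; omega
    · rename_i h0; rw [h0, Nat.zero_add, Nat.mod_eq_of_lt h]; omega
  · rcases eq_or_lt_of_le (show c % e + t ≤ e by omega) with h | h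
    · rw [h, Nat.mod_self]; omega
    · rw [Nat.mod_eq_of_lt h]; omega

lemma helperA {e : ℕ} (he : 1 < e) (x : ℕ) (h : (x + (e - 2)) % e = e - 1) : x % e = 1 := by
  have hr : x % e < e := Nat.mod_lt _ (by omega)
  have h1 : (x % e + (e - 2)) % e = (x + (e - 2)) % e := Nat.mod_add_mod x e _
  rw [← h1] at h
  rcases lt_or_ge (x % e + (e - 2)) e with hlt | hge
  · rw [Nat.mod_eq_of_lt hlt] at h; omega
  · rw [Nat.mod_eq_sub_mod hge, Nat.mod_eq_of_lt (by omega)] at h; omega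

lemma helperB {e : ℕ} (he : 1 < e) (x : ℕ) (h : (x + (e - 1)) % e = 0) : x % e = 1 := by
  have hr : x % e < e := Nat.mod_lt _ (by omega)
  have h1 : (x % e + (e - 1)) % e = (x + (e - 1)) % e := Nat.mod_add_mod x e _
  rw [← h1] at h
  rcases lt_or_ge (x % e + (e - 1)) e with hlt | hge
  · rw [Nat.mod_eq_of_lt hlt] at h; omega
  · rw [Nat.mod_eq_sub_mod hge, Nat.mod_eq_of_lt (by omega)] at h; omega

lemma sVal_succ {e : ℕ} (he : 1 < e) (c : ℕ) (h : 2 ≤ sVal e c) :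
    sVal e (c + 1) = sVal e c - 1 := by
  have hr : c % e < e := Nat.mod_lt _ (by omega)
  have h1 : (c % e + 1) % e = (c + 1) % e := Nat.mod_add_mod c e 1
  unfold sVal at h ⊢
  by_cases h0 : c % e = 0
  · have h2 : (c + 1) % e = 1 := by rw [← h1, h0]; exact Nat.mod_eq_of_lt (by omega)
    rw [if_pos h0, if_neg (by omega), h2]
  · rw [if_neg h0] at h
    have h2 : (c + 1) % e = c % e + 1 := by rw [← h1]; exact Nat.mod_eq_of_lt (by omega)
    rw [if_neg h0, if_neg (by omega), h2]; omega

lemma rim_length (e : ℕ) : ∀ (l : List ℕ) (c : ℕ), (rimCounts e c l).length = l.length := by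
  intro l
  induction l with
  | nil => intro c; rfl
  | cons a rest ih => intro c; rw [rimCounts_cons]; simp [ih]

lemma bList_length (e : ℕ) (l : List ℕ) (c : ℕ) : (bList e c l).length = l.length := by
  unfold bList; rw [List.length_zipWith, rim_length]; omega

lemma bList_pos {e : ℕ} (he : 1 < e) : ∀ (l : List ℕ) (c : ℕ), (∀ a ∈ l, 0 < a) →
    ∀ x ∈ bList e c l, 0 < x := by
  intro l
  induction l with
  | nil => intro c _ x hx; simp [bList] at hx
  | cons a rest ih =>
    intro c hp x hx
    rw [bList_cons] at hx
    rcases List.mem_cons.1 hx with h | h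
    · have ha : 0 < a := hp a (by simp)
      have h1 := tv_pos he c a (rest.headD 0) ha
      have h2 := tv_le_a e c a (rest.headD 0) ha
      omega
    · exact ih _ (fun b hb => hp b (by simp [hb])) x h

lemma bList_le_head {e : ℕ} (he : 1 < e) : ∀ (l : List ℕ) (c : ℕ), l.Chain' (· ≥ ·) →
    ∀ x ∈ bList e c l, x ≤ l.headD 0 := by
  intro l
  induction l with
  | nil => intro c _ x hx; simp [bList] at hx
  | cons a rest ih =>
    intro c hc x hx
    rw [bList_cons] at hx
    rcases List.mem_cons.1 hx with h | h
    · simp only [List.headD_cons]; omega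
    · rcases rest with _ | ⟨r, rs⟩
      · simp [bList] at h
      · have h1 := ih _ (List.isChain_cons_cons.1 hc).2 x h
        have h2 : a ≥ r := (List.isChain_cons_cons.1 hc).1
        simp only [List.headD_cons] at h1 ⊢
        omega

lemma bList_chain {e : ℕ} (he : 1 < e) : ∀ (l : List ℕ) (c : ℕ), l.Chain' (· ≥ ·) →
    (∀ a ∈ l, 0 < a) → (bList e c l).Chain' (· ≥ ·) := by
  intro l
  induction l with
  | nil => intro c _ _; simp [bList, List.Chain']
  | cons a rest ih =>
    intro c hc hp
    rw [bList_cons]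
    rcases rest with _ | ⟨r, rs⟩
    · simp [bList, List.Chain']
    · rw [bList_cons]
      refine List.isChain_cons_cons.2 ⟨?_, ?_⟩
      · -- a - (t-1) ≥ r - (t'-1)
        have har : a ≥ r := (List.isChain_cons_cons.1 hc).1
        have hr : 0 < r := hp r (by simp)
        have h1 : tv e c a ((r :: rs).headD 0) ≤ a - r + 1 := by
          simp only [List.headD_cons]; exact tv_le_n e c a r (by omega)
        omega
      · rw [← bList_cons]
        exact ih _ (List.isChain_cons_cons.1 hc).2 (fun b hb => hp b (by simp [hb]))

lemma bList_sum {e : ℕ} (he : 1 < e) : ∀ (l : List ℕ) (c : ℕ), (∀ a ∈ l, 0 < a) →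
    (bList e c l).sum + (rimCounts e c l).sum = l.sum + l.length := by
  intro l
  induction l with
  | nil => intro c _; simp [bList, rimCounts]
  | cons a rest ih =>
    intro c hp
    rw [bList_cons, rimCounts_cons]
    have ha : 0 < a := hp a (by simp)
    have h1 := tv_pos he c a (rest.headD 0) ha
    have h2 := tv_le_a e c a (rest.headD 0) ha
    have h3 := ih (c + tv e c a (rest.headD 0)) (fun b hb => hp b (by simp [hb]))
    simp only [List.sum_cons, List.length_cons]
    omega

lemma sum_rim_ge_len {e : ℕ} (he : 1 < e) : ∀ (l : List ℕ) (c : ℕ), (∀ a ∈ l, 0 < a) →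
    l.length ≤ (rimCounts e c l).sum := by
  intro l
  induction l with
  | nil => intro c _; simp [rimCounts]
  | cons a rest ih =>
    intro c hp
    rw [rimCounts_cons]
    have h1 := tv_pos he c a (rest.headD 0) (hp a (by simp))
    have h3 := ih (c + tv e c a (rest.headD 0)) (fun b hb => hp b (by simp [hb]))
    simp only [List.sum_cons, List.length_cons]
    omega

lemma count_zero_of_le (l : List ℕ) (v bnd : ℕ) (h : ∀ x ∈ l, x ≤ bnd) (hv : bnd < v) :
    l.count v = 0 :=
  List.count_eq_zero.2 (fun hm => absurd (h v hm) (by omega))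

lemma run_lemma {e : ℕ} (he : 1 < e) : ∀ (rest : List ℕ) (c v : ℕ), 0 < v →
    (v :: rest).Chain' (· ≥ ·) → (∀ a ∈ v :: rest, 0 < a) →
    (bList e c (v :: rest)).count v ≤ (v :: rest).count v ∧
    ((bList e c (v :: rest)).count v = (v :: rest).count v →
      (c + (v :: rest).count v - 1) % e = e - 1 ∨
      (v = 1 ∧ (rimCounts e c (v :: rest)).sum = (v :: rest).count v ∧
        (bList e c (v :: rest)).getLast? = some 1)) := by
  intro rest
  induction rest with
  | nil =>
    intro c v hv hc hp
    have htv : tv e c v (([] : List ℕ).headD 0) = min v (sVal e c) := by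
      unfold tv; simp
    set t := tv e c v (([] : List ℕ).headD 0) with htdef
    have hs1 := sVal_one_le he c
    have h1 : 1 ≤ t := tv_pos he c v _ hv
    have h2 : t ≤ v := tv_le_a e c v _ hv
    have hb : bList e c [v] = [v - (t - 1)] := rfl
    have hrim : rimCounts e c [v] = [t] := rfl
    have hcount : ([v] : List ℕ).count v = 1 := by simp
    rw [hb, hrim, hcount]
    by_cases ht1 : t = 1
    · have hone : v - (t - 1) = v := by omega
      rw [hone]
      refine ⟨by simp, fun _ => ?_⟩
      by_cases hv1 : v = 1
      · right
        exact ⟨hv1, by simp [ht1], by simp [hv1]⟩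
      · left
        have hs : sVal e c = 1 := by omega
        have hcm : c % e = e - 1 := by
          unfold sVal at hs; split at hs <;> omega
        simpa using hcm
    · have hne : v - (t - 1) ≠ v := by omega
      have hz : ([v - (t - 1)] : List ℕ).count v = 0 := by
        simp [List.count_cons, hne]
      rw [hz]
      exact ⟨by omega, by omega⟩
  | cons a2 rs ih =>
    intro c v hv hc hp
    have ha2 : 0 < a2 := hp a2 (by simp)
    have hva2 : v ≥ a2 := (List.isChain_cons_cons.1 hc).1
    by_cases h2v : a2 = v
    · subst h2v
      -- t = 1 here
      have ht : tv e c a2 ((a2 :: rs).headD 0) = 1 := by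
        unfold tv
        simp only [List.headD_cons]
        simp only [show a2 ≠ 0 by omega, ↓reduceIte]
        have h1 := sVal_one_le he c
        have h2 : a2 - a2 + 1 = 1 := by omega
        rw [h2]
        omega
      have hb : bList e c (a2 :: a2 :: rs) =
          a2 :: bList e (c + 1) (a2 :: rs) := by
        rw [bList_cons, ht]; norm_num
      have hrim : (rimCounts e c (a2 :: a2 :: rs)).sum =
          1 + (rimCounts e (c + 1) (a2 :: rs)).sum := by
        rw [rimCounts_cons, ht]; simp
      obtain ⟨ih1, ih2⟩ := ih (c + 1) a2 hv (List.isChain_cons_cons.1 hc).2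
        (fun b hb => hp b (by simp [hb]))
      have hcc : (a2 :: a2 :: rs).count a2 = (a2 :: rs).count a2 + 1 := by
        simp [List.count_cons]
      have hbc : (bList e c (a2 :: a2 :: rs)).count a2 =
          (bList e (c + 1) (a2 :: rs)).count a2 + 1 := by
        rw [hb]; simp [List.count_cons]
      constructor
      · omega
      · intro heq
        have heq' : (bList e (c + 1) (a2 :: rs)).count a2 = (a2 :: rs).count a2 := by omega
        rcases ih2 heq' with h | ⟨hv1, hsum, hlast⟩
        · left
          have h1 : 1 ≤ (a2 :: rs).count a2 := by simp [List.count_cons]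
          have : c + (a2 :: a2 :: rs).count a2 - 1 = c + 1 + (a2 :: rs).count a2 - 1 := by
            omega
          rw [this]
          exact h
        · right
          refine ⟨hv1, by omega, ?_⟩
          rw [hb]
          rw [bList_cons] at hlast ⊢
          rw [List.getLast?_cons_cons]
          exact hlast
    · -- a2 < v : run has length 1
      have ha2v : a2 < v := by omega
      have hrest_le : ∀ x ∈ a2 :: rs, x ≤ a2 := by
        have hpw : (a2 :: rs).Pairwise (· ≥ ·) :=
          List.isChain_iff_pairwise.1 (List.isChain_cons_cons.1 hc).2
        intro x hx
        rcases List.mem_cons.1 hx with h | h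
        · omega
        · exact (List.pairwise_cons.1 hpw).1 x h
      have hcnt0 : (a2 :: rs).count v = 0 := count_zero_of_le _ v a2 hrest_le ha2v
      have hcount : (v :: a2 :: rs).count v = 1 := by
        simp [List.count_cons, hcnt0]
      have hbcnt0 : (bList e (c + tv e c v ((a2 :: rs).headD 0)) (a2 :: rs)).count v = 0 := by
        refine count_zero_of_le _ v a2 ?_ ha2v
        intro x hx
        have := bList_le_head he (a2 :: rs) _ (List.isChain_cons_cons.1 hc).2 x hx
        simpa using this
      set t := tv e c v ((a2 :: rs).headD 0) with htdef
      have h1 : 1 ≤ t := tv_pos he c v _ hv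
      have h2 : t ≤ v := tv_le_a e c v _ hv
      have hn : t ≤ v - a2 + 1 := by
        rw [htdef]
        simpa using tv_le_n e c v a2 (by omega)
      have hb : bList e c (v :: a2 :: rs) =
          (v - (t - 1)) :: bList e (c + t) (a2 :: rs) := by rw [bList_cons]
      rw [hcount, hb]
      by_cases ht1 : t = 1
      · have hone : v - (t - 1) = v := by omega
        rw [hone]
        have hcv : (v :: bList e (c + t) (a2 :: rs)).count v = 1 := by
          simp [List.count_cons, hbcnt0]
        rw [hcv]
        refine ⟨le_refl _, fun _ => ?_⟩
        left
        -- sVal e c = 1 since min (v - a2 + 1) s = 1 and v - a2 + 1 ≥ 2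
        have hs : sVal e c = 1 := by
          have htv : tv e c v ((a2 :: rs).headD 0) = min (v - a2 + 1) (sVal e c) := by
            unfold tv
            simp only [List.headD_cons]
            simp only [show a2 ≠ 0 by omega, ↓reduceIte]
          have := sVal_one_le he c
          omega
        have hcm : c % e = e - 1 := by
          unfold sVal at hs; split at hs <;> omega
        simpa using hcm
      · have hne : v - (t - 1) ≠ v := by omega
        have hcv : ((v - (t - 1)) :: bList e (c + t) (a2 :: rs)).count v = 0 := by
          simp [List.count_cons, hbcnt0, hne]
        rw [hcv]
        exact ⟨by omega, by omega⟩

lemma count_lemma {e : ℕ} (he : 1 < e) : ∀ (l : List ℕ) (c : ℕ),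
    l.Chain' (· ≥ ·) → (∀ a ∈ l, 0 < a) → (∀ w, 0 < w → l.count w < e) → ∀ v, 0 < v →
    (bList e c l).count v < e ∨
      ((bList e c l).count v = e ∧ (c + (rimCounts e c l).sum) % e ≠ 0 ∧
        (bList e c l).getLast? = some v) := by
  intro l
  induction l with
  | nil => intro c _ _ _ v hv; left; simp [bList]; omega
  | cons a rest ih =>
    intro c hc hp hreg v hv
    have ha : 0 < a := hp a (by simp)
    set t := tv e c a (rest.headD 0) with htdef
    have h1 : 1 ≤ t := tv_pos he c a _ ha
    have h2 : t ≤ a := tv_le_a e c a _ ha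
    have hb : bList e c (a :: rest) = (a - (t - 1)) :: bList e (c + t) rest := by
      rw [bList_cons]
    have hrimsum : (rimCounts e c (a :: rest)).sum
        = t + (rimCounts e (c + t) rest).sum := by
      rw [rimCounts_cons, List.sum_cons, ← htdef]
    by_cases hb0 : a - (t - 1) = v
    · -- head of bList equals v
      by_cases hav : a = v
      · subst hav
        left
        obtain ⟨r1, _⟩ := run_lemma he rest c a ha hc hp
        have := hreg a ha
        omega
      · have hva : v < a := by omega
        have ht2 : t = a - v + 1 := by omega
        have hts : t ≤ sVal e c := tv_le_s e c a _
        rcases rest with _ | ⟨a2, rs⟩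
        · left
          have hone : (bList e c [a]).count v = 1 := by
            rw [hb]; simp [bList, List.count_cons, hb0]
          omega
        · have ha2 : 0 < a2 := hp a2 (by simp)
          have haa2 : a ≥ a2 := (List.isChain_cons_cons.1 hc).1
          have hna : t ≤ a - a2 + 1 := by
            rw [htdef]; simpa using tv_le_n e c a a2 (by omega)
          by_cases h2v : a2 = v
          · subst h2v
            obtain ⟨r1, r2⟩ := run_lemma he rs (c + t) a2 hv
              (List.isChain_cons_cons.1 hc).2 (fun b hb => hp b (by simp [hb]))
            set k := (a2 :: rs).count a2 with hk
            have hkpos : 1 ≤ k := by rw [hk]; simp [List.count_cons]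
            have hcl : (a :: a2 :: rs).count a2 = k := by
              rw [hk]; simp [List.count_cons, show ¬ (a2 = a) by omega, show ¬ (a = a2) by omega]
            have hke : k < e := by
              have := hreg a2 hv
              omega
            have hbcnt : (bList e c (a :: a2 :: rs)).count a2 =
                1 + (bList e (c + t) (a2 :: rs)).count a2 := by
              rw [hb]; simp [List.count_cons, hb0]; omega
            rcases eq_or_lt_of_le r1 with hKk | hKk
            · rcases r2 hKk with hD1 | ⟨hv1, hsum, hlast⟩
              · by_cases hke2 : k = e - 1
                · exfalso
                  have hD1' : (c + t + (e - 2)) % e = e - 1 := by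
                    rw [show c + t + (e - 2) = c + t + k - 1 by omega]
                    exact hD1
                  exact arith_ne_one he (by omega) hts (helperA he (c + t) hD1')
                · left; omega
              · by_cases hke2 : k = e - 1
                · right
                  refine ⟨by omega, ?_, ?_⟩
                  · rw [hrimsum]
                    intro hcon
                    have hcon' : (c + t + (e - 1)) % e = 0 := by
                      rw [show c + t + (e - 1)
                          = c + (t + (rimCounts e (c + t) (a2 :: rs)).sum) by omega]
                      exact hcon
                    exact arith_ne_one he (by omega) hts (helperB he (c + t) hcon')
                  · rw [hb, bList_cons, List.getLast?_cons_cons, ← bList_cons, hlast, hv1]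
                · left; omega
            · left; omega
          · have ha2v : a2 < v := by omega
            have hbcnt0 : (bList e (c + t) (a2 :: rs)).count v = 0 := by
              refine count_zero_of_le _ v a2 ?_ ha2v
              intro x hx
              simpa using bList_le_head he (a2 :: rs) _ (List.isChain_cons_cons.1 hc).2 x hx
            left
            have hone : (bList e c (a :: a2 :: rs)).count v = 1 := by
              rw [hb]; simp [List.count_cons, hb0, hbcnt0]
            omega
    · -- head of bList differs from v
      have hcnt : (bList e c (a :: rest)).count v = (bList e (c + t) rest).count v := by
        rw [hb]; simp [List.count_cons, hb0]
      rcases rest with _ | ⟨a2, rs⟩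
      · left; rw [hcnt]; simp [bList]; omega
      · have hregrest : ∀ w, 0 < w → (a2 :: rs).count w < e := by
          intro w hw
          have hr := hreg w hw
          have hle : (a2 :: rs).count w ≤ (a :: a2 :: rs).count w :=
            (List.sublist_cons_self a (a2 :: rs)).count_le w
          omega
        rcases ih (c + t) (List.isChain_cons_cons.1 hc).2
            (fun b hb => hp b (by simp [hb])) hregrest v hv with h | ⟨hce, hsum, hlast⟩
        · left; omega
        · right
          refine ⟨by omega, ?_, ?_⟩
          · rw [hrimsum]
            rw [show c + (t + (rimCounts e (c + t) (a2 :: rs)).sum)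
                = c + t + (rimCounts e (c + t) (a2 :: rs)).sum by omega]
            exact hsum
          · rw [hb, bList_cons, List.getLast?_cons_cons, ← bList_cons]
            exact hlast

lemma eq_case {e : ℕ} (he : 1 < e) : ∀ (l : List ℕ) (c : ℕ), l.Chain' (· ≥ ·) →
    (∀ a ∈ l, 0 < a) → (rimCounts e c l).sum = l.length → sVal e c ≤ l.length →
    sVal e c ≤ l.count (l.headD 0) := by
  intro l
  induction l with
  | nil => intro c _ _ _ hlen; simpa using hlen
  | cons a rest ih =>
    intro c hc hp hsum hlen
    have ha : 0 < a := hp a (by simp)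
    set t := tv e c a (rest.headD 0) with htdef
    have h1 : 1 ≤ t := tv_pos he c a _ ha
    have hsum' : t + (rimCounts e (c + t) rest).sum = rest.length + 1 := by
      have : (rimCounts e c (a :: rest)).sum = t + (rimCounts e (c + t) rest).sum := by
        rw [rimCounts_cons, List.sum_cons, ← htdef]
      rw [← this, hsum]; simp
    have hge := sum_rim_ge_len he rest (c + t) (fun b hb => hp b (by simp [hb]))
    have ht1 : t = 1 := by omega
    have hsumrest : (rimCounts e (c + 1) rest).sum = rest.length := by
      rw [← ht1]; omega
    by_cases hs1 : sVal e c = 1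
    · rw [hs1]; simp [List.count_cons]
    · have hs2 : 2 ≤ sVal e c := by have := sVal_one_le he c; omega
      rcases rest with _ | ⟨r, rs⟩
      · simp at hlen; omega
      · have hr : 0 < r := hp r (by simp)
        have har : a ≥ r := (List.isChain_cons_cons.1 hc).1
        have hra : r = a := by
          -- t = 1 = min (a - r + 1) (sVal e c), sVal ≥ 2 ⇒ a - r + 1 = 1
          have htv : t = min (a - r + 1) (sVal e c) := by
            rw [htdef]; unfold tv; simp only [List.headD_cons]; simp only [show r ≠ 0 by omega, ↓reduceIte]
          omega
        have hlen' : sVal e (c + 1) ≤ (r :: rs).length := by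
          rw [sVal_succ he c hs2]; simp at hlen ⊢; omega
        have := ih (c + 1) (List.isChain_cons_cons.1 hc).2 (fun b hb => hp b (by simp [hb]))
          hsumrest hlen'
        rw [sVal_succ he c hs2] at this
        simp only [List.headD_cons] at this ⊢
        rw [hra] at this ⊢
        simp [List.count_cons] at this ⊢
        omega

lemma set_last_eq (y : ℕ) : ∀ (xs : List ℕ), xs ≠ [] →
    xs.set (xs.length - 1) y = xs.dropLast ++ [y] := by
  intro xs
  induction xs with
  | nil => simp
  | cons x xs ih =>
    intro _
    cases xs with
    | nil => simp
    | cons z zs =>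
      have h := ih (by simp)
      simp only [List.length_cons, Nat.add_sub_cancel] at h ⊢
      rw [show (x :: z :: zs).set (zs.length + 1) y = x :: (z :: zs).set zs.length y from rfl,
        h]
      simp

/-- Removing the truncated `e`-rim of an `e`-regular partition `λ` yields an `e`-regular
partition `μ`, with `|μ| < |λ|` whenever `λ` is nonempty. -/
theorem stmt3 (e : ℕ) (he : 1 < e) (l : List ℕ)
    (hsort : l.Chain' (· ≥ ·)) (hpos : ∀ a ∈ l, 0 < a) (hreg : RegularL e l) :
    (tildeParts e l).Chain' (· ≥ ·) ∧ (∀ a ∈ tildeParts e l, 0 < a) ∧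
    RegularL e (tildeParts e l) ∧ (l ≠ [] → (tildeParts e l).sum < l.sum) := by
  have hb_chain := bList_chain he l 0 hsort hpos
  have hb_pair : (bList e 0 l).Pairwise (· ≥ ·) := List.isChain_iff_pairwise.1 hb_chain
  have hb_pos := bList_pos he l 0 hpos
  have hb_sum := bList_sum he l 0 hpos
  have hsumge := sum_rim_ge_len he l 0 hpos
  have hcnt : ∀ v, 0 < v → (bList e 0 l).count v < e ∨
      ((bList e 0 l).count v = e ∧ (rimCounts e 0 l).sum % e ≠ 0 ∧
        (bList e 0 l).getLast? = some v) := by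
    intro v hv
    have h := count_lemma he l 0 hsort hpos (fun w hw => hreg w hw) v hv
    simpa using h
  have htp : tildeParts e l =
      (if (rimCounts e 0 l).sum % e = 0 then bList e 0 l
        else (bList e 0 l).set ((bList e 0 l).length - 1)
          ((bList e 0 l).getLast?.getD 1 - 1)).filter (fun a => decide (0 < a)) := rfl
  by_cases h0 : (rimCounts e 0 l).sum % e = 0
  · have htp2 : tildeParts e l = bList e 0 l := by
      rw [htp, if_pos h0]
      exact List.filter_eq_self.2 (fun x hx => by simpa using hb_pos x hx)
    refine ⟨by rw [htp2]; exact hb_chain, fun a ha => by rw [htp2] at ha; exact hb_pos a ha,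
      ?_, ?_⟩
    · intro v hv
      rw [htp2]
      rcases hcnt v hv with h | ⟨_, hne, _⟩
      · exact h
      · exact absurd h0 hne
    · intro hne
      rw [htp2]
      rcases Nat.lt_or_ge l.length (rimCounts e 0 l).sum with hgt | hge2
      · omega
      · exfalso
        have hseq : (rimCounts e 0 l).sum = l.length := by omega
        have hs0 : sVal e 0 = e := by unfold sVal; simp
        have hlen : e ≤ l.length :=
          Nat.le_of_dvd (List.length_pos_iff.2 hne) (Nat.dvd_of_mod_eq_zero (hseq ▸ h0))
        have hcc := eq_case he l 0 hsort hpos hseq (by rw [hs0]; exact hlen)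
        rw [hs0] at hcc
        rcases l with _ | ⟨a, rest⟩
        · exact hne rfl
        · have ha : 0 < a := hpos a (by simp)
          have hra := hreg a ha
          simp only [List.headD_cons] at hcc
          omega
  · have hlne : l ≠ [] := by
      intro h; subst h; simp [rimCounts] at h0
    have hbne : bList e 0 l ≠ [] :=
      List.length_pos_iff.1 (by rw [bList_length]; exact List.length_pos_iff.2 hlne)
    set b := bList e 0 l with hbdef
    have hL : b.getLast? = some (b.getLast hbne) := List.getLast?_eq_getLast hbne
    set L := b.getLast hbne with hLdef
    have hLmem : L ∈ b := List.getLast_mem hbne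
    have hLpos : 0 < L := hb_pos L hLmem
    have hsplit : b.dropLast ++ [L] = b := List.dropLast_concat_getLast hbne
    have hset : b.set (b.length - 1) (L - 1) = b.dropLast ++ [L - 1] :=
      set_last_eq (L - 1) b hbne
    have htp2 : tildeParts e l = (b.dropLast ++ [L - 1]).filter (fun a => decide (0 < a)) := by
      rw [htp, if_neg h0, hL]
      simp only [Option.getD_some]
      rw [hset]
    have hge : ∀ x ∈ b.dropLast, L ≤ x := by
      have hp2 : (b.dropLast ++ [L]).Pairwise (· ≥ ·) := by rw [hsplit]; exact hb_pair
      rw [List.pairwise_append] at hp2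
      intro x hx
      exact hp2.2.2 x hx L (by simp)
    have hdpos : ∀ x ∈ b.dropLast, 0 < x := fun x hx =>
      hb_pos x ((List.dropLast_sublist b).subset hx)
    have hcountb : ∀ v : ℕ, b.count v = b.dropLast.count v + if v = L then 1 else 0 := by
      intro v
      conv_lhs => rw [← hsplit]
      rw [List.count_append]
      simp only [List.count_cons, List.count_nil, Nat.zero_add, beq_iff_eq]
      split <;> split <;> omega
    have hsumb : b.dropLast.sum + L = b.sum := by
      conv_rhs => rw [← hsplit]
      rw [List.sum_append]
      simp
    have hbl : b.sum ≤ l.sum := by omega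
    have hdplt : b.dropLast.sum < l.sum := by omega
    by_cases hL1 : L = 1
    · have htp3 : tildeParts e l = b.dropLast := by
        rw [htp2, hL1, List.filter_append]
        rw [List.filter_eq_self.2 (fun x hx => by simpa using hdpos x hx)]
        simp
      refine ⟨?_, ?_, ?_, ?_⟩
      · rw [htp3]
        exact List.isChain_iff_pairwise.2 (hb_pair.sublist (List.dropLast_sublist b))
      · intro a ha; rw [htp3] at ha; exact hdpos a ha
      · intro v hv
        rw [htp3]
        by_cases hvL : v = L
        · have h := hcountb v
          rw [if_pos hvL] at h
          rcases hcnt v hv with hlt | ⟨heq, _, _⟩ <;> omega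
        · have h := hcountb v
          rw [if_neg hvL] at h
          rcases hcnt v hv with hlt | ⟨_, _, hlast⟩
          · omega
          · rw [hL] at hlast
            exact absurd (Option.some.inj hlast) (fun hh => hvL hh.symm)
      · intro _
        rw [htp3]
        exact hdplt
    · have htp3 : tildeParts e l = b.dropLast ++ [L - 1] := by
        rw [htp2]
        refine List.filter_eq_self.2 (fun x hx => ?_)
        rcases List.mem_append.1 hx with h | h
        · simpa using hdpos x h
        · simp only [List.mem_singleton] at h
          subst h
          simp only [decide_eq_true_eq]
          omega
      have hcount3 : ∀ v : ℕ,
          (b.dropLast ++ [L - 1]).count v = b.dropLast.count v + if v = L - 1 then 1 else 0 := by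
        intro v
        rw [List.count_append]
        simp only [List.count_cons, List.count_nil, Nat.zero_add, beq_iff_eq]
        split <;> split <;> omega
      refine ⟨?_, ?_, ?_, ?_⟩
      · rw [htp3]
        refine List.isChain_iff_pairwise.2 (List.pairwise_append.2
          ⟨hb_pair.sublist (List.dropLast_sublist b), by simp, ?_⟩)
        intro x hx y hy
        simp only [List.mem_singleton] at hy
        subst hy
        have := hge x hx
        omega
      · intro a ha
        rw [htp3] at ha
        rcases List.mem_append.1 ha with h | h
        · exact hdpos a h
        · simp only [List.mem_singleton] at h; omega
      · intro v hv
        rw [htp3, hcount3 v]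
        by_cases hv1 : v = L - 1
        · rw [if_pos hv1]
          have hz : b.dropLast.count v = 0 :=
            List.count_eq_zero.2 (fun hm => by have := hge v hm; omega)
          omega
        · rw [if_neg hv1]
          by_cases hvL : v = L
          · have h := hcountb v
            rw [if_pos hvL] at h
            rcases hcnt v hv with hlt | ⟨heq, _, _⟩ <;> omega
          · have h := hcountb v
            rw [if_neg hvL] at h
            rcases hcnt v hv with hlt | ⟨_, _, hlast⟩
            · omega
            · rw [hL] at hlast
              exact absurd (Option.some.inj hlast) (fun hh => hvL hh.symm)
      · intro _
        rw [htp3, List.sum_append]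
        simp only [List.sum_cons, List.sum_nil]
        omega
end

section
/- Let e > 1 and define the multisegment associated to an l-partition λ with charge s ∈ ℤ^l as the formal sum over all nonzero parts λᶜᵢ of the segments [1-i+s_c, …, λᶜᵢ-i+s_c] (residues mod e). For l = 1, s = 0, and λ an e-regular partition, the resulting multisegment is aperiodic: for every length L ≥ 1 there exists a residue j ∈ ℤ/eℤ such that no segment of length L with tail j occurs in the multisegment. -/
/-- A partition, encoded as its (1-indexed) sequence of parts: `l i` is the `i`-th part
(`l 0` is irrelevant). Parts are nonincreasing and eventually zero. -/
def IsPartition (l : ℕ → ℕ) : Prop :=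
  (∀ i j, 1 ≤ i → i ≤ j → l j ≤ l i) ∧ ∃ N, ∀ i, N ≤ i → l i = 0

/-- `l` is `e`-regular: no nonzero part is repeated `e` or more times. -/
def ERegular (e : ℕ) (l : ℕ → ℕ) : Prop :=
  ∀ v, 0 < v → Nat.card {i : ℕ | 1 ≤ i ∧ l i = v} < e

/-- For an `e`-regular partition `λ` (charge `0`, `l = 1`), the row multisegment (row `i`
contributes a segment of head `1 - i` and length `λᵢ`, hence tail `λᵢ - i` mod `e`) is
aperiodic: for every length `L ≥ 1` there is a residue `j` such that no row gives a
segment of length `L` and tail `j`. -/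
theorem stmt8 (e : ℕ) (he : 1 < e) (l : ℕ → ℕ) (hl : IsPartition l)
    (hreg : ERegular e l) :
    ∀ L : ℕ, 1 ≤ L → ∃ j : ZMod e, ∀ i, 1 ≤ i → l i = L →
      (((L : ℤ) - (i : ℤ) : ℤ) : ZMod e) ≠ j := by
  intro L hL
  obtain ⟨hmono, N0, hN0⟩ := hl
  set T : Finset ℕ := (Finset.range N0).filter (fun i => 1 ≤ i ∧ l i = L) with hT
  have hmemT : ∀ i, i ∈ T ↔ (1 ≤ i ∧ l i = L) := by
    intro i
    simp only [hT, Finset.mem_filter, Finset.mem_range]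
    constructor
    · rintro ⟨_, h⟩; exact h
    · rintro ⟨h1, h2⟩
      refine ⟨?_, h1, h2⟩
      by_contra hlt
      push_neg at hlt
      have := hN0 i hlt
      omega
  have hsetT : {i : ℕ | 1 ≤ i ∧ l i = L} = (↑T : Set ℕ) := by
    ext i; simp [hmemT i]
  have hcard : T.card < e := by
    have := hreg L hL
    rwa [hsetT, Nat.card_coe_set_eq, Set.ncard_coe_finset] at this
  rcases T.eq_empty_or_nonempty with hemp | hne
  · refine ⟨0, fun i hi hli => ?_⟩
    exfalso
    have : i ∈ T := (hmemT i).2 ⟨hi, hli⟩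
    simp [hemp] at this
  · set a := T.min' hne with ha
    have haT : a ∈ T := T.min'_mem hne
    have ha1 : 1 ≤ a := ((hmemT a).1 haT).1
    have hbound : ∀ i ∈ T, i < a + T.card := by
      intro i hi
      have hai : a ≤ i := T.min'_le i hi
      have hsub : Finset.Icc a i ⊆ T := by
        intro k hk
        rw [Finset.mem_Icc] at hk
        have h1k : 1 ≤ k := le_trans ha1 hk.1
        have h1 : l i ≤ l k := hmono k i h1k hk.2
        have h2 : l k ≤ l a := hmono a k ha1 hk.1
        have hla : l a = L := ((hmemT a).1 haT).2
        have hli : l i = L := ((hmemT i).1 hi).2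
        exact (hmemT k).2 ⟨h1k, le_antisymm (hla ▸ h2) (hli ▸ h1)⟩
      have := Finset.card_le_card hsub
      rw [Nat.card_Icc] at this
      omega
    refine ⟨(((L : ℤ) - (a + T.card : ℕ)) : ZMod e), fun i hi hli => ?_⟩
    have hiT : i ∈ T := (hmemT i).2 ⟨hi, hli⟩
    have hib : i < a + T.card := hbound i hiT
    have hai : a ≤ i := T.min'_le i hiT
    intro heq
    have hdvd : (e : ℤ) ∣ ((a + T.card : ℕ) : ℤ) - (i : ℤ) := by
      rw [← ZMod.intCast_zmod_eq_zero_iff_dvd]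
      push_cast at heq ⊢
      linear_combination heq
    have hpos : 0 < ((a + T.card : ℕ) : ℤ) - (i : ℤ) := by push_cast; omega
    have hle := Int.le_of_dvd hpos hdvd
    push_cast at hle
    omega
end

section
/- Let λ = (λ₁,…,λ_r) be an e-regular partition with r nonzero parts and let 0 < s < e. In the bipartition (λ¹, λ²) = θ_{e,(0,s)}(λ) defined by λ¹ = (λ₁,…,λ_{e-s}, λ_{2e-s+1},…,λ_{3e-s}, …) and λ² = (λ_{e-s+1},…,λ_{2e-s}, λ_{3e-s+1},…, …), we have |λ¹| + |λ²| = |λ|, and λ¹ᵢ ≥ λ²_{i+s} for all i as well as λ²ᵢ ≥ λ¹_{i+e-s} for all i (the two FLOTW row-dominance inequalities for charge (0,s)). -/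
/-- The (1-indexed) row of `λ` giving the `j`-th part of the first component `λ¹` of
`θ_{e,(0,s)}(λ)`: rows `1, …, e-s`, then rows `2e-s+1, …, 3e-s`, then `4e-s+1, …`. -/
def idx1 (e s j : ℕ) : ℕ :=
  if j ≤ e - s then j else j + ((j - (e - s) - 1) / e + 1) * e

/-- The (1-indexed) row of `λ` giving the `j`-th part of the second component `λ²` of
`θ_{e,(0,s)}(λ)`: rows `e-s+1, …, 2e-s`, then rows `3e-s+1, …, 4e-s`, then `5e-s+1, …`. -/
def idx2 (e s j : ℕ) : ℕ := j + ((j - 1) / e + 1) * e - s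

section Aux

variable {e s : ℕ}

lemma idx1_low {j : ℕ} (h : j ≤ e - s) : idx1 e s j = j := by
  unfold idx1; rw [if_pos h]

lemma idx1_mid {j : ℕ} (h1 : e - s < j) (h2 : j ≤ e) : idx1 e s j = j + e := by
  unfold idx1
  rw [if_neg (by omega), Nat.div_eq_of_lt (by omega), zero_add, one_mul]

lemma idx2_low {j : ℕ} (hs : s < e) (h1 : 1 ≤ j) (h2 : j ≤ e) : idx2 e s j = j + (e - s) := by
  unfold idx2
  rw [Nat.div_eq_of_lt (by omega), zero_add, one_mul]
  omega

lemma idx1_succ (hs0 : 0 < s) (hs : s < e) (j : ℕ) : idx1 e s j < idx1 e s (j + 1) := by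
  unfold idx1
  by_cases h1 : j + 1 ≤ e - s
  · rw [if_pos h1, if_pos (by omega)]; omega
  · rw [if_neg h1]
    by_cases h2 : j ≤ e - s
    · rw [if_pos h2]
      exact lt_of_lt_of_le (by omega) (Nat.le_add_right _ _)
    · rw [if_neg h2]
      have hq : (j - (e - s) - 1) / e ≤ (j + 1 - (e - s) - 1) / e :=
        Nat.div_le_div_right (by omega)
      have hA : (j - (e - s) - 1) / e * e ≤ (j + 1 - (e - s) - 1) / e * e :=
        Nat.mul_le_mul_right e hq
      have e1 : ((j - (e - s) - 1) / e + 1) * e = (j - (e - s) - 1) / e * e + e := by ring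
      have e2 : ((j + 1 - (e - s) - 1) / e + 1) * e = (j + 1 - (e - s) - 1) / e * e + e := by ring
      rw [e1, e2]
      revert hA
      generalize (j - (e - s) - 1) / e * e = A
      generalize (j + 1 - (e - s) - 1) / e * e = B
      intro hA; omega

lemma idx2_succ (hs : s < e) (j : ℕ) : idx2 e s j < idx2 e s (j + 1) := by
  unfold idx2
  have hq : (j - 1) / e ≤ (j + 1 - 1) / e := Nat.div_le_div_right (by omega)
  have hA : (j - 1) / e * e ≤ (j + 1 - 1) / e * e := Nat.mul_le_mul_right e hq
  have hE : e ≤ (j - 1) / e * e + e := Nat.le_add_left _ _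
  have e1 : ((j - 1) / e + 1) * e = (j - 1) / e * e + e := by ring
  have e2 : ((j + 1 - 1) / e + 1) * e = (j + 1 - 1) / e * e + e := by ring
  rw [e1, e2]
  revert hA
  generalize (j - 1) / e * e = A
  generalize (j + 1 - 1) / e * e = B
  intro hA; omega

lemma idx1_sm (hs0 : 0 < s) (hs : s < e) : StrictMono (idx1 e s) :=
  strictMono_nat_of_lt_succ (idx1_succ hs0 hs)

lemma idx2_sm (hs : s < e) : StrictMono (idx2 e s) :=
  strictMono_nat_of_lt_succ (idx2_succ hs)

lemma idx1_ge (hs0 : 0 < s) (hs : s < e) (j : ℕ) : j ≤ idx1 e s j :=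
  (idx1_sm hs0 hs).le_apply

lemma idx2_ge (hs : s < e) (j : ℕ) : j ≤ idx2 e s j :=
  (idx2_sm hs).le_apply

lemma idx1_shift (hs0 : 0 < s) (hs : s < e) (j : ℕ) :
    idx1 e s (j + e) = idx1 e s j + 2 * e := by
  unfold idx1
  rw [if_neg (by omega)]
  by_cases h2 : j ≤ e - s
  · rw [if_pos h2, Nat.div_eq_of_lt (show j + e - (e - s) - 1 < e by omega)]
    omega
  · rw [if_neg h2]
    have heq : j + e - (e - s) - 1 = j - (e - s) - 1 + e := by omega
    rw [heq, Nat.add_div_right _ (show 0 < e by omega)]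
    generalize (j - (e - s) - 1) / e = q
    ring

lemma idx2_shift (hs : s < e) {j : ℕ} (hj : 1 ≤ j) :
    idx2 e s (j + e) = idx2 e s j + 2 * e := by
  unfold idx2
  have heq : j + e - 1 = j - 1 + e := by omega
  rw [heq, Nat.add_div_right _ (show 0 < e by omega)]
  generalize (j - 1) / e = q
  have e1 : (q + 1 + 1) * e = q * e + e + e := by ring
  have e2 : (q + 1) * e = q * e + e := by ring
  rw [e1, e2]
  generalize q * e = A
  omega

lemma idx1_le (hs : s < e) (j : ℕ) : idx1 e s j ≤ 2 * j + e := by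
  unfold idx1
  split
  · omega
  · have h := Nat.div_mul_le_self (j - (e - s) - 1) e
    have e1 : ((j - (e - s) - 1) / e + 1) * e = (j - (e - s) - 1) / e * e + e := by ring
    rw [e1]
    revert h
    generalize (j - (e - s) - 1) / e * e = A
    intro h; omega

lemma idx2_le (hs : s < e) (j : ℕ) : idx2 e s j ≤ 2 * j + e := by
  unfold idx2
  have h := Nat.div_mul_le_self (j - 1) e
  have e1 : ((j - 1) / e + 1) * e = (j - 1) / e * e + e := by ring
  rw [e1]
  revert h
  generalize (j - 1) / e * e = A
  intro h; omega

lemma idx_cover (hs0 : 0 < s) (hs : s < e) :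
    ∀ r, 1 ≤ r → (∃ j, 1 ≤ j ∧ idx1 e s j = r) ∨ (∃ j, 1 ≤ j ∧ idx2 e s j = r) := by
  intro r
  induction r using Nat.strong_induction_on with
  | _ r ih =>
    intro hr
    rcases le_or_gt r (e - s) with h | h
    · exact Or.inl ⟨r, hr, idx1_low h⟩
    rcases le_or_gt r (2 * e - s) with h2 | h2
    · exact Or.inr ⟨r - (e - s), by omega, by
        rw [idx2_low hs (by omega) (by omega)]; omega⟩
    rcases le_or_gt r (2 * e) with h3 | h3
    · exact Or.inl ⟨r - e, by omega, by
        rw [idx1_mid (by omega) (by omega)]; omega⟩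
    · rcases ih (r - 2 * e) (by omega) (by omega) with ⟨j, hj, hje⟩ | ⟨j, hj, hje⟩
      · exact Or.inl ⟨j + e, by omega, by rw [idx1_shift hs0 hs]; omega⟩
      · exact Or.inr ⟨j + e, by omega, by rw [idx2_shift hs hj]; omega⟩

lemma idx_disj (hs0 : 0 < s) (hs : s < e) :
    ∀ n j k, 1 ≤ j → 1 ≤ k → j + k ≤ n → idx1 e s j ≠ idx2 e s k := by
  intro n
  induction n using Nat.strong_induction_on with
  | _ n ih =>
    intro j k hj hk hn
    rcases le_or_gt j e with hje | hje <;> rcases le_or_gt k e with hke | hke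
    · rw [idx2_low hs hk hke]
      rcases le_or_gt j (e - s) with h | h
      · rw [idx1_low h]; omega
      · rw [idx1_mid h hje]; omega
    · have h1 : idx1 e s j ≤ idx1 e s e := (idx1_sm hs0 hs).monotone hje
      have h2 : idx2 e s (e + 1) ≤ idx2 e s k := (idx2_sm hs).monotone (by omega)
      have h3 : idx1 e s e = e + e := idx1_mid (by omega) le_rfl
      have h4 : idx2 e s (e + 1) = idx2 e s 1 + 2 * e := by
        have := idx2_shift hs (j := 1) le_rfl
        rw [Nat.add_comm] at this; exact this
      have h5 : idx2 e s 1 = 1 + (e - s) := idx2_low hs le_rfl (by omega)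
      omega
    · have h1 : idx1 e s (e + 1) ≤ idx1 e s j := (idx1_sm hs0 hs).monotone (by omega)
      have h2 : idx2 e s k ≤ idx2 e s e := (idx2_sm hs).monotone hke
      have h3 : idx1 e s (e + 1) = idx1 e s 1 + 2 * e := by
        have := idx1_shift hs0 hs 1
        rw [Nat.add_comm] at this; exact this
      have h4 : idx1 e s 1 = 1 := idx1_low (by omega)
      have h5 : idx2 e s e = e + (e - s) := idx2_low hs (by omega) le_rfl
      omega
    · have e1 : idx1 e s j = idx1 e s (j - e) + 2 * e := by
        conv_lhs => rw [show j = j - e + e by omega]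
        exact idx1_shift hs0 hs (j - e)
      have e2 : idx2 e s k = idx2 e s (k - e) + 2 * e := by
        conv_lhs => rw [show k = k - e + e by omega]
        exact idx2_shift hs (by omega)
      have := ih (n - 2 * e) (by omega) (j - e) (k - e) (by omega) (by omega) (by omega)
      omega

lemma sum_range_eq_sum_Icc (l : ℕ → ℕ) (N : ℕ) :
    ∑ i ∈ Finset.range N, l (i + 1) = ∑ x ∈ Finset.Icc 1 N, l x := by
  induction N with
  | zero => simp
  | succ n ihn =>
    rw [Finset.sum_range_succ, ihn, Finset.sum_Icc_succ_top (by omega)]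

end Aux

/-- For `0 < s < e` and an `e`-regular partition `λ` with split
`(λ¹, λ²) = θ_{e,(0,s)}(λ)`: the sizes add up, `|λ¹| + |λ²| = |λ|`, and the two FLOTW
row-dominance inequalities `λ¹ᵢ ≥ λ²_{i+s}` and `λ²ᵢ ≥ λ¹_{i+e-s}` hold for all `i ≥ 1`. -/
theorem stmt14 (e s : ℕ) (he : 1 < e) (hs0 : 0 < s) (hs : s < e) (l : ℕ → ℕ)
    (hl : IsPartition l) (hreg : ERegular e l) :
    (∀ N, (∀ i, N ≤ i → l i = 0) →
      ((∑ i ∈ Finset.range N, l (idx1 e s (i + 1))) +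
        ∑ i ∈ Finset.range N, l (idx2 e s (i + 1))) = ∑ i ∈ Finset.range N, l (i + 1)) ∧
    (∀ i, 1 ≤ i → l (idx2 e s (i + s)) ≤ l (idx1 e s i)) ∧
    (∀ i, 1 ≤ i → l (idx1 e s (i + (e - s))) ≤ l (idx2 e s i)) := by
  classical
  refine ⟨?_, ?_, ?_⟩
  · -- sizes add up
    intro N hN
    set f1 : ℕ → ℕ := fun i => idx1 e s (i + 1) with hf1
    set f2 : ℕ → ℕ := fun i => idx2 e s (i + 1) with hf2
    set S1 : Finset ℕ := (Finset.range N).image f1 with hS1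
    set S2 : Finset ℕ := (Finset.range N).image f2 with hS2
    have hsum1 : ∑ x ∈ S1, l x = ∑ i ∈ Finset.range N, l (f1 i) :=
      Finset.sum_image (fun a _ b _ h => by
        have := (idx1_sm hs0 hs).injective h; omega)
    have hsum2 : ∑ x ∈ S2, l x = ∑ i ∈ Finset.range N, l (f2 i) :=
      Finset.sum_image (fun a _ b _ h => by
        have := (idx2_sm hs).injective h; omega)
    have hdisj : Disjoint S1 S2 := by
      rw [Finset.disjoint_left]
      intro x hx1 hx2
      simp only [hS1, hS2, Finset.mem_image, Finset.mem_range] at hx1 hx2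
      obtain ⟨a, _, rfl⟩ := hx1
      obtain ⟨b, _, hba⟩ := hx2
      exact idx_disj hs0 hs (a + 1 + (b + 1)) (a + 1) (b + 1)
        (by omega) (by omega) le_rfl hba.symm
    have hunion : ∑ x ∈ S1, l x + ∑ x ∈ S2, l x = ∑ x ∈ S1 ∪ S2, l x :=
      (Finset.sum_union hdisj).symm
    have hsubM : S1 ∪ S2 ⊆ Finset.Icc 1 (2 * N + e) := by
      intro x hx
      rcases Finset.mem_union.mp hx with hx | hx <;>
        simp only [hS1, hS2, Finset.mem_image, Finset.mem_range] at hx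
      · obtain ⟨a, ha, rfl⟩ := hx
        have h1 := idx1_ge hs0 hs (a + 1)
        have h2 := idx1_le hs (a + 1)
        simp only [hf1, Finset.mem_Icc]
        constructor <;> omega
      · obtain ⟨a, ha, rfl⟩ := hx
        have h1 := idx2_ge hs (a + 1)
        have h2 := idx2_le hs (a + 1)
        simp only [hf2, Finset.mem_Icc]
        constructor <;> omega
    have hbig : ∑ x ∈ S1 ∪ S2, l x = ∑ x ∈ Finset.Icc 1 (2 * N + e), l x := by
      apply Finset.sum_subset hsubM
      intro x hx hnx
      rw [Finset.mem_Icc] at hx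
      rcases idx_cover hs0 hs x hx.1 with ⟨j, hj, hje⟩ | ⟨j, hj, hje⟩
      · rcases le_or_gt j N with h | h
        · exfalso
          apply hnx
          apply Finset.mem_union_left
          refine Finset.mem_image.mpr ⟨j - 1, Finset.mem_range.mpr (by omega), ?_⟩
          simp only [hf1]
          rw [show j - 1 + 1 = j by omega]
          exact hje
        · have := idx1_ge hs0 hs j
          exact hN x (by omega)
      · rcases le_or_gt j N with h | h
        · exfalso
          apply hnx
          apply Finset.mem_union_right
          refine Finset.mem_image.mpr ⟨j - 1, Finset.mem_range.mpr (by omega), ?_⟩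
          simp only [hf2]
          rw [show j - 1 + 1 = j by omega]
          exact hje
        · have := idx2_ge hs j
          exact hN x (by omega)
    have hshrink : ∑ x ∈ Finset.Icc 1 (2 * N + e), l x = ∑ x ∈ Finset.Icc 1 N, l x := by
      symm
      apply Finset.sum_subset (Finset.Icc_subset_Icc_right (by omega))
      intro x hx hnx
      rw [Finset.mem_Icc] at hx
      rw [Finset.mem_Icc] at hnx
      exact hN x (by omega)
    rw [← hsum1, ← hsum2, hunion, hbig, hshrink, sum_range_eq_sum_Icc]
  · -- first FLOTW inequality
    intro i hi
    have hle : idx1 e s i ≤ idx2 e s (i + s) := by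
      by_cases h : i ≤ e - s
      · rw [idx1_low h]
        have := idx2_ge hs (i + s)
        omega
      · unfold idx1 idx2
        rw [if_neg h]
        have hq : (i - (e - s) - 1) / e ≤ (i + s - 1) / e := Nat.div_le_div_right (by omega)
        have hA : (i - (e - s) - 1) / e * e ≤ (i + s - 1) / e * e := Nat.mul_le_mul_right e hq
        have e1 : ((i - (e - s) - 1) / e + 1) * e = (i - (e - s) - 1) / e * e + e := by ring
        have e2 : ((i + s - 1) / e + 1) * e = (i + s - 1) / e * e + e := by ring
        rw [e1, e2]
        revert hA
        generalize (i - (e - s) - 1) / e * e = A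
        generalize (i + s - 1) / e * e = B
        intro hA; omega
    exact hl.1 _ _ (le_trans hi (idx1_ge hs0 hs i)) hle
  · -- second FLOTW inequality
    intro i hi
    have hle : idx2 e s i ≤ idx1 e s (i + (e - s)) := by
      unfold idx1 idx2
      rw [if_neg (by omega)]
      have heq : i + (e - s) - (e - s) - 1 = i - 1 := by omega
      rw [heq]
      generalize (i - 1) / e = q
      have e1 : (q + 1) * e = q * e + e := by ring
      rw [e1]
      generalize q * e = A
      omega
    exact hl.1 _ _ (le_trans hi (idx2_ge hs i)) hle
end
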